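/- (Kelvin's circulation theorem in ℝⁿ.) Let n ≥ 2, let u : ℝ × ℝⁿ → ℝⁿ be smooth, and suppose there exists a continuously differentiable h : ℝ × ℝⁿ → ℝ such that ∂ₜu + (u·∇)u = −∇h everywhere (isentropic flow, compressible or incompressible). Let γ : ℝ × ℝ → ℝⁿ be twice continuously differentiable with γ(t, s+1) = γ(t, s) for all t, s (a closed loop) and ∂ₜγ(t,s) = u(t, γ(t,s)) (the loop is transported along streamlines). Then the circulation t ↦ ∫₀¹ ⟨u(t, γ(t,s)), ∂ₛγ(t,s)⟩ ds is constant. -/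

import Mathlib

open scoped RealInnerProductSpace
open ContinuousLinearMap

section Aux

variable {n : ℕ}

local notation "E" => EuclideanSpace ℝ (Fin n)

lemma aux_fderiv_snd (f : ℝ × E → E) (hf : Differentiable ℝ f) (t : ℝ) (x : E) (w : E) :
    fderiv ℝ (fun y => f (t, y)) x w = fderiv ℝ f (t, x) (0, w) := by
  have hin : HasFDerivAt (fun y : E => ((t, y) : ℝ × E)) (inr ℝ ℝ E) x :=
    hasFDerivAt_prodMk_right t x
  have := ((hf (t, x)).hasFDerivAt.comp x hin).fderiv
  rw [show (fun y : E => f (t, y)) = f ∘ (fun y : E => ((t, y) : ℝ × E)) from rfl, this]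
  simp

lemma aux_fderiv_snd_scalar (f : ℝ × E → ℝ) (hf : Differentiable ℝ f) (t : ℝ) (x : E) :
    fderiv ℝ (fun y => f (t, y)) x = (fderiv ℝ f (t, x)).comp (inr ℝ ℝ E) := by
  have hin : HasFDerivAt (fun y : E => ((t, y) : ℝ × E)) (inr ℝ ℝ E) x :=
    hasFDerivAt_prodMk_right t x
  exact ((hf (t, x)).hasFDerivAt.comp x hin).fderiv

lemma aux_gradient_eq (f : ℝ × E → ℝ) (hf : Differentiable ℝ f) (t : ℝ) (x : E) :
    gradient (fun y => f (t, y)) x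
      = (InnerProductSpace.toDual ℝ E).symm ((fderiv ℝ f (t, x)).comp (inr ℝ ℝ E)) := by
  rw [gradient, aux_fderiv_snd_scalar f hf t x]

lemma aux_inner_gradient (f : ℝ × E → ℝ) (hf : Differentiable ℝ f) (t : ℝ) (x : E) (v : E) :
    ⟪gradient (fun y => f (t, y)) x, v⟫ = fderiv ℝ (fun y => f (t, y)) x v := by
  rw [gradient, InnerProductSpace.toDual_symm_apply]

end Aux

/-- Kelvin's circulation theorem in `ℝⁿ`: for isentropic flow, the circulation of the
velocity around a closed loop transported along streamlines is constant in time. -/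
theorem kelvin_circulation (n : ℕ) (hn : 2 ≤ n)
    (u : ℝ × EuclideanSpace ℝ (Fin n) → EuclideanSpace ℝ (Fin n))
    (hu : ContDiff ℝ (⊤ : ℕ∞) u)
    (h : ℝ × EuclideanSpace ℝ (Fin n) → ℝ) (hh : ContDiff ℝ 1 h)
    (euler : ∀ (t : ℝ) (x : EuclideanSpace ℝ (Fin n)),
      deriv (fun τ => u (τ, x)) t + fderiv ℝ (fun y => u (t, y)) x (u (t, x))
        = -gradient (fun y => h (t, y)) x)
    (γ : ℝ × ℝ → EuclideanSpace ℝ (Fin n)) (hγ : ContDiff ℝ 2 γ)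
    (hper : ∀ t s : ℝ, γ (t, s + 1) = γ (t, s))
    (htrans : ∀ t s : ℝ, deriv (fun τ => γ (τ, s)) t = u (t, γ (t, s))) :
    ∀ t₁ t₂ : ℝ,
      (∫ s in (0:ℝ)..1, ⟪u (t₁, γ (t₁, s)), deriv (fun σ => γ (t₁, σ)) s⟫)
        = ∫ s in (0:ℝ)..1, ⟪u (t₂, γ (t₂, s)), deriv (fun σ => γ (t₂, σ)) s⟫ := by
  have hγd : Differentiable ℝ γ := hγ.differentiable (by norm_num)
  have hud : Differentiable ℝ u := hu.differentiable (by simp)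
  have hhd : Differentiable ℝ h := hh.differentiable one_ne_zero
  -- the partial derivative in `s`
  have h1 : ∀ t s : ℝ, HasDerivAt (fun σ => γ (t, σ)) (fderiv ℝ γ (t, s) (0, 1)) s := by
    intro t s
    have hin : HasDerivAt (fun σ : ℝ => ((t, σ) : ℝ × ℝ)) ((0 : ℝ), (1 : ℝ)) s :=
      (hasDerivAt_const s t).prodMk (hasDerivAt_id s)
    exact (hγd (t, s)).hasFDerivAt.comp_hasDerivAt s hin
  -- the partial derivative in `t`
  have h2 : ∀ t s : ℝ, HasDerivAt (fun τ => γ (τ, s)) (fderiv ℝ γ (t, s) (1, 0)) t := by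
    intro t s
    have hin : HasDerivAt (fun τ : ℝ => ((τ, s) : ℝ × ℝ)) ((1 : ℝ), (0 : ℝ)) t :=
      (hasDerivAt_id t).prodMk (hasDerivAt_const t s)
    exact (hγd (t, s)).hasFDerivAt.comp_hasDerivAt t hin
  have hD1u : ∀ t s : ℝ, fderiv ℝ γ (t, s) (1, 0) = u (t, γ (t, s)) :=
    fun t s => ((h2 t s).deriv).symm.trans (htrans t s)
  have htransHas : ∀ t s : ℝ, HasDerivAt (fun τ => γ (τ, s)) (u (t, γ (t, s))) t :=
    fun t s => hD1u t s ▸ h2 t s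
  -- second derivative facts
  have hγ' : ContDiff ℝ 1 (fderiv ℝ γ) := hγ.fderiv_right (by norm_num)
  have hγ'd : Differentiable ℝ (fderiv ℝ γ) := hγ'.differentiable one_ne_zero
  have hsymm : ∀ (p : ℝ × ℝ) (v w : ℝ × ℝ),
      fderiv ℝ (fderiv ℝ γ) p v w = fderiv ℝ (fderiv ℝ γ) p w v := by
    intro p v w
    exact second_derivative_symmetric (fun y => (hγd y).hasFDerivAt)
      (hγ'd p).hasFDerivAt v w
  -- t-derivative of s-partial of γ
  have h4 : ∀ t s : ℝ, HasDerivAt (fun τ => fderiv ℝ γ (τ, s) (0, 1))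
      (fderiv ℝ (fderiv ℝ γ) (t, s) (1, 0) (0, 1)) t := by
    intro t s
    have hin : HasDerivAt (fun τ : ℝ => ((τ, s) : ℝ × ℝ)) ((1 : ℝ), (0 : ℝ)) t :=
      (hasDerivAt_id t).prodMk (hasDerivAt_const t s)
    have hc : HasDerivAt (fun τ : ℝ => fderiv ℝ γ (τ, s))
        (fderiv ℝ (fderiv ℝ γ) (t, s) (1, 0)) t :=
      (hγ'd (t, s)).hasFDerivAt.comp_hasDerivAt t hin
    simpa using hc.clm_apply (hasDerivAt_const t ((0 : ℝ), (1 : ℝ)))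
  -- s-derivative of t-partial of γ
  have h6a : ∀ t s : ℝ, HasDerivAt (fun σ => fderiv ℝ γ (t, σ) (1, 0))
      (fderiv ℝ (fderiv ℝ γ) (t, s) (0, 1) (1, 0)) s := by
    intro t s
    have hin : HasDerivAt (fun σ : ℝ => ((t, σ) : ℝ × ℝ)) ((0 : ℝ), (1 : ℝ)) s :=
      (hasDerivAt_const s t).prodMk (hasDerivAt_id s)
    have hc : HasDerivAt (fun σ : ℝ => fderiv ℝ γ (t, σ))
        (fderiv ℝ (fderiv ℝ γ) (t, s) (0, 1)) s :=
      (hγ'd (t, s)).hasFDerivAt.comp_hasDerivAt s hin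
    simpa using hc.clm_apply (hasDerivAt_const s ((1 : ℝ), (0 : ℝ)))
  -- s-derivative of u(t, γ(t,s))
  have hudiff_space : ∀ (t : ℝ) (x : (EuclideanSpace ℝ (Fin n))), DifferentiableAt ℝ (fun y : (EuclideanSpace ℝ (Fin n)) => u (t, y)) x := by
    intro t x
    exact (hud (t, x)).comp x ((differentiableAt_const t).prodMk differentiableAt_id)
  have h6b : ∀ t s : ℝ, HasDerivAt (fun σ => u (t, γ (t, σ)))
      (fderiv ℝ (fun y : (EuclideanSpace ℝ (Fin n)) => u (t, y)) (γ (t, s)) (fderiv ℝ γ (t, s) (0, 1))) s := by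
    intro t s
    exact (hudiff_space t (γ (t, s))).hasFDerivAt.comp_hasDerivAt s (h1 t s)
  -- mixed partials agree and equal D_x u (D2 γ)
  have hmix : ∀ t s : ℝ, fderiv ℝ (fderiv ℝ γ) (t, s) (0, 1) (1, 0)
      = fderiv ℝ (fun y : (EuclideanSpace ℝ (Fin n)) => u (t, y)) (γ (t, s)) (fderiv ℝ γ (t, s) (0, 1)) := by
    intro t s
    have heq : (fun σ : ℝ => fderiv ℝ γ (t, σ) (1, 0)) = fun σ : ℝ => u (t, γ (t, σ)) :=
      funext fun σ => hD1u t σ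
    exact (heq ▸ h6a t s).unique (h6b t s)
  have hD2t : ∀ t s : ℝ, HasDerivAt (fun τ => fderiv ℝ γ (τ, s) (0, 1))
      (fderiv ℝ (fun y : (EuclideanSpace ℝ (Fin n)) => u (t, y)) (γ (t, s)) (fderiv ℝ γ (t, s) (0, 1))) t := by
    intro t s
    have := h4 t s
    rwa [hsymm, hmix] at this
  -- t-derivative of u(t, γ(t,s)) equals -∇h
  have hsplit : ∀ (t : ℝ) (x : (EuclideanSpace ℝ (Fin n))) (v : (EuclideanSpace ℝ (Fin n))),
      fderiv ℝ u (t, x) (1, v)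
        = deriv (fun τ => u (τ, x)) t + fderiv ℝ (fun y : (EuclideanSpace ℝ (Fin n)) => u (t, y)) x v := by
    intro t x v
    have hDt : HasDerivAt (fun τ => u (τ, x)) (fderiv ℝ u (t, x) (1, 0)) t := by
      have hin : HasDerivAt (fun τ : ℝ => ((τ, x) : ℝ × (EuclideanSpace ℝ (Fin n)))) ((1 : ℝ), (0 : (EuclideanSpace ℝ (Fin n)))) t :=
        (hasDerivAt_id t).prodMk (hasDerivAt_const t x)
      exact (hud (t, x)).hasFDerivAt.comp_hasDerivAt t hin
    rw [hDt.deriv, aux_fderiv_snd u hud t x v, ← map_add]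
    norm_num
  have h7 : ∀ t s : ℝ, HasDerivAt (fun τ => u (τ, γ (τ, s)))
      (-gradient (fun y : (EuclideanSpace ℝ (Fin n)) => h (t, y)) (γ (t, s))) t := by
    intro t s
    have hin : HasDerivAt (fun τ : ℝ => ((τ, γ (τ, s)) : ℝ × (EuclideanSpace ℝ (Fin n))))
        ((1 : ℝ), u (t, γ (t, s))) t := (hasDerivAt_id t).prodMk (htransHas t s)
    have := (hud (t, γ (t, s))).hasFDerivAt.comp_hasDerivAt t hin
    rwa [hsplit t (γ (t, s)) (u (t, γ (t, s))), euler t (γ (t, s))] at this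
  -- integrand and its t-derivative
  set g : ℝ → ℝ → ℝ := fun t s => ⟪u (t, γ (t, s)), fderiv ℝ γ (t, s) (0, 1)⟫ with hg_def
  set g' : ℝ → ℝ → ℝ := fun t s =>
      ⟪u (t, γ (t, s)),
        fderiv ℝ (fun y : (EuclideanSpace ℝ (Fin n)) => u (t, y)) (γ (t, s)) (fderiv ℝ γ (t, s) (0, 1))⟫
      + ⟪-gradient (fun y : (EuclideanSpace ℝ (Fin n)) => h (t, y)) (γ (t, s)), fderiv ℝ γ (t, s) (0, 1)⟫ with hg'_def
  have hgdt : ∀ t s : ℝ, HasDerivAt (fun τ => g τ s) (g' t s) t := by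
    intro t s
    exact (h7 t s).inner ℝ (hD2t t s)
  -- antiderivative in s of g'
  set φ : ℝ → ℝ → ℝ := fun t s =>
      (1 / 2 : ℝ) * ⟪u (t, γ (t, s)), u (t, γ (t, s))⟫ - h (t, γ (t, s)) with hφ_def
  have hφds : ∀ t s : ℝ, HasDerivAt (fun σ => φ t σ) (g' t s) s := by
    intro t s
    have hw := h6b t s
    have hsq : HasDerivAt (fun σ => ⟪u (t, γ (t, σ)), u (t, γ (t, σ))⟫)
        (⟪u (t, γ (t, s)),
          fderiv ℝ (fun y : (EuclideanSpace ℝ (Fin n)) => u (t, y)) (γ (t, s)) (fderiv ℝ γ (t, s) (0, 1))⟫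
        + ⟪fderiv ℝ (fun y : (EuclideanSpace ℝ (Fin n)) => u (t, y)) (γ (t, s)) (fderiv ℝ γ (t, s) (0, 1)),
            u (t, γ (t, s))⟫) s := hw.inner ℝ hw
    have hhdiff : DifferentiableAt ℝ (fun y : (EuclideanSpace ℝ (Fin n)) => h (t, y)) (γ (t, s)) :=
      (hhd (t, γ (t, s))).comp (γ (t, s)) ((differentiableAt_const t).prodMk differentiableAt_id)
    have hhs : HasDerivAt (fun σ => h (t, γ (t, σ)))
        (fderiv ℝ (fun y : (EuclideanSpace ℝ (Fin n)) => h (t, y)) (γ (t, s)) (fderiv ℝ γ (t, s) (0, 1))) s :=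
      by have := hhdiff.hasFDerivAt.comp_hasDerivAt s (h1 t s); exact this
    have := (hsq.const_mul (1 / 2 : ℝ)).sub hhs
    refine this.congr_deriv ?_
    rw [hg'_def]
    simp only [inner_neg_left]
    rw [aux_inner_gradient h hhd t (γ (t, s)) (fderiv ℝ γ (t, s) (0, 1))]
    rw [real_inner_comm (fderiv ℝ (fun y : (EuclideanSpace ℝ (Fin n)) => u (t, y)) (γ (t, s))
      (fderiv ℝ γ (t, s) (0, 1))) (u (t, γ (t, s)))]
    ring
  -- continuity of g and g'
  have hD2cont : Continuous (fun p : ℝ × ℝ => fderiv ℝ γ p (0, 1)) :=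
    (hγ'.continuous).clm_apply continuous_const
  have hγc : Continuous γ := hγ.continuous
  have huc : Continuous u := hu.continuous
  have huγ : Continuous (fun p : ℝ × ℝ => u (p.1, γ p)) :=
    huc.comp (continuous_fst.prodMk hγc)
  have hgcont : Continuous (fun p : ℝ × ℝ => g p.1 p.2) := by
    simp only [hg_def]
    exact huγ.inner hD2cont
  have hg'cont : Continuous (fun p : ℝ × ℝ => g' p.1 p.2) := by
    have hfu : Continuous (fderiv ℝ u) := hu.continuous_fderiv (by simp)
    have hfh : Continuous (fderiv ℝ h) := hh.continuous_fderiv one_ne_zero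
    have e1 : ∀ p : ℝ × ℝ, fderiv ℝ (fun y : (EuclideanSpace ℝ (Fin n)) => u (p.1, y)) (γ p) (fderiv ℝ γ p (0, 1))
        = fderiv ℝ u (p.1, γ p) (0, fderiv ℝ γ p (0, 1)) :=
      fun p => aux_fderiv_snd u hud p.1 (γ p) _
    have e2 : ∀ p : ℝ × ℝ, gradient (fun y : (EuclideanSpace ℝ (Fin n)) => h (p.1, y)) (γ p)
        = (InnerProductSpace.toDual ℝ (EuclideanSpace ℝ (Fin n))).symm
            ((fderiv ℝ h (p.1, γ p)).comp (inr ℝ ℝ (EuclideanSpace ℝ (Fin n)))) :=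
      fun p => aux_gradient_eq h hhd p.1 (γ p)
    simp only [hg'_def, e1, e2]
    apply Continuous.add
    · exact huγ.inner ((hfu.comp (continuous_fst.prodMk hγc)).clm_apply
        (continuous_const.prodMk hD2cont))
    · exact ((((InnerProductSpace.toDual ℝ (EuclideanSpace ℝ (Fin n))).symm.continuous.comp
        ((hfh.comp (continuous_fst.prodMk hγc)).clm_comp continuous_const)).neg)).inner hD2cont
  -- ∫ g' t = 0
  have hzero : ∀ t : ℝ, (∫ s in (0:ℝ)..1, g' t s) = 0 := by
    intro t
    have hint : IntervalIntegrable (g' t) MeasureTheory.volume 0 1 :=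
      (hg'cont.comp (continuous_const.prodMk continuous_id)).intervalIntegrable 0 1
    have := intervalIntegral.integral_eq_sub_of_hasDerivAt
      (f := fun σ => φ t σ) (fun s _ => hφds t s) hint
    rw [this]
    have hper' : γ (t, (1 : ℝ)) = γ (t, 0) := by
      have := hper t 0
      rwa [zero_add] at this
    simp [hφ_def, hper']
  -- differentiate under the integral
  set F : ℝ → ℝ := fun t => ∫ s in (0:ℝ)..1, g t s with hF_def
  have hFder : ∀ t₀ : ℝ, HasDerivAt F 0 t₀ := by
    intro t₀
    obtain ⟨C, hC⟩ := (((isCompact_Icc (a := t₀ - 1) (b := t₀ + 1)).prod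
      (isCompact_Icc (a := (0:ℝ)) (b := 1)))).exists_bound_of_continuousOn
      hg'cont.continuousOn
    have key := intervalIntegral.hasDerivAt_integral_of_dominated_loc_of_deriv_le
      (F := g) (F' := g') (x₀ := t₀) (a := 0) (b := 1) (bound := fun _ => C)
      (s := Metric.ball t₀ 1) (μ := MeasureTheory.volume) (Metric.ball_mem_nhds t₀ one_pos)
      (Filter.Eventually.of_forall fun x =>
        ((hgcont.comp (continuous_const.prodMk continuous_id)).aestronglyMeasurable))
      ((hgcont.comp (continuous_const.prodMk continuous_id)).intervalIntegrable 0 1)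
      ((hg'cont.comp (continuous_const.prodMk continuous_id)).aestronglyMeasurable)
      (MeasureTheory.ae_of_all _ fun s hs x hx => by
        have hx' : x ∈ Set.Icc (t₀ - 1) (t₀ + 1) := by
          rw [Metric.mem_ball, Real.dist_eq] at hx
          constructor <;> [linarith [abs_lt.1 hx |>.2, abs_lt.1 hx |>.1];
            linarith [abs_lt.1 hx |>.2, abs_lt.1 hx |>.1]]
        have hs' : s ∈ Set.Icc (0:ℝ) 1 := Set.Ioc_subset_Icc_self
          (by rwa [Set.uIoc_of_le (by norm_num : (0:ℝ) ≤ 1)] at hs)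
        exact hC (x, s) (Set.mk_mem_prod hx' hs'))
      (intervalIntegrable_const)
      (MeasureTheory.ae_of_all _ fun s hs x hx => hgdt x s)
    have := key.2
    rwa [hzero t₀] at this
  have hFconst : ∀ t₁ t₂ : ℝ, F t₁ = F t₂ := by
    intro t₁ t₂
    exact is_const_of_deriv_eq_zero (fun t => (hFder t).differentiableAt)
      (fun t => (hFder t).deriv) t₁ t₂
  intro t₁ t₂
  have hrw : ∀ t s : ℝ, deriv (fun σ => γ (t, σ)) s = fderiv ℝ γ (t, s) (0, 1) :=
    fun t s => (h1 t s).deriv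
  calc (∫ s in (0:ℝ)..1, ⟪u (t₁, γ (t₁, s)), deriv (fun σ => γ (t₁, σ)) s⟫)
      = F t₁ := by simp only [hF_def, hg_def, hrw]
    _ = F t₂ := hFconst t₁ t₂
    _ = ∫ s in (0:ℝ)..1, ⟪u (t₂, γ (t₂, s)), deriv (fun σ => γ (t₂, σ)) s⟫ := by
        simp only [hF_def, hg_def, hrw]
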